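/- Let N be a sharp fs monoid, L a sharp fs monoid with N ⊆ L ⊆ N^gp, M a sharp fs monoid, and i : N → M a local morphism. Suppose n ∈ N^gp satisfies i^gp(n) = 0, -n ∈ L, and n ≠ 0. Then the push-out M ⊔_N L (along i and the inclusion N ↪ L) is not quasi-integral. -/

import Mathlib

/-- `η : M →+ G` exhibits the abelian group `G` as the groupification of the
commutative monoid `M`. -/
def IsGroupification {M G : Type*} [AddCommMonoid M] [AddCommGroup G] (η : M →+ G) : Prop :=
  (∀ x : G, ∃ a b : M, x = η a - η b) ∧
  (∀ a b : M, η a = η b ↔ ∃ k : M, a + k = b + k)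

/-- A commutative monoid is sharp if its unit group is trivial. -/
def IsSharp (M : Type*) [AddCommMonoid M] : Prop := ∀ x : M, IsAddUnit x → x = 0

/-- A morphism of monoids is local if the preimage of the unit group is the unit group. -/
def IsLocalMonoidHom {N M : Type*} [AddCommMonoid N] [AddCommMonoid M] (f : N →+ M) : Prop :=
  ∀ n : N, IsAddUnit (f n) → IsAddUnit n

/-- `(P, iM, iL)` is the push-out `M ⊔_N L` of `f : N →+ M` and `g : N →+ L` in the
category of commutative monoids. -/
def IsMonPushout {N M L P : Type*} [AddCommMonoid N] [AddCommMonoid M] [AddCommMonoid L]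
    [AddCommMonoid P] (f : N →+ M) (g : N →+ L) (iM : M →+ P) (iL : L →+ P) : Prop :=
  iM.comp f = iL.comp g ∧
  ∀ (Q : Type*) [AddCommMonoid Q] (jM : M →+ Q) (jL : L →+ Q),
    jM.comp f = jL.comp g → ∃! h : P →+ Q, h.comp iM = jM ∧ h.comp iL = jL

/-- The saturation of a subset `P` of an abelian group `G`:
`P^sat = { x ∈ G | ∃ a ≥ 1, a • x ∈ P }`. -/
def saturationOf {G : Type*} [AddCommGroup G] (P : Set G) : Set G :=
  {x : G | ∃ a : ℕ, 0 < a ∧ a • x ∈ P}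

/-!
Write `n = a - b` with `a, b ∈ N`. Then `-n + a = b` in `L`, and `i a`, `i b` have the same image
in `M^gp`, so `p := [-n] ∈ M ⊔_N L` dies in the groupification. But `p ≠ 0`: a sharp monoid maps
onto `{0, ⊤}` by sending exactly `0` to `0`, and since `i` and `N ↪ L` only send `0` to `0`, these
maps on `M` and `L` glue to the push-out and send `p` to `⊤`.
-/

universe w

section Sharp

variable {M : Type*} [AddCommMonoid M]

theorem IsSharp.eq_zero_of_add_eq_zero (hM : IsSharp M) {a b : M} (hab : a + b = 0) : a = 0 :=
  hM a (IsAddUnit.of_add_eq_zero b hab)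

theorem AddSubmonoid.isSharp {G : Type*} [AddCommGroup G] (L : AddSubmonoid G)
    (hL : ∀ x : G, x ∈ L → -x ∈ L → x = 0) : IsSharp L := by
  rintro ⟨x, hx⟩ ⟨⟨_, ⟨y, hy⟩, hxy, -⟩, rfl⟩
  have hyx : y = -x := eq_neg_of_add_eq_zero_right (congrArg Subtype.val hxy)
  exact Subtype.ext (hL x hx (hyx ▸ hy))

open Classical in
/-- `WithTop PUnit` is the two-element monoid `{0, ⊤}`. -/
noncomputable def IsSharp.nonzeroIndicator (hM : IsSharp M) : M →+ WithTop PUnit.{w + 1} where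
  toFun m := if m = 0 then 0 else ⊤
  map_zero' := if_pos rfl
  map_add' a b := by
    by_cases ha : a = 0
    · simp [ha]
    · have hab : a + b ≠ 0 := fun h => ha (hM.eq_zero_of_add_eq_zero h)
      simp [ha, hab]

theorem IsSharp.nonzeroIndicator_apply_eq_zero_iff (hM : IsSharp M) {m : M} :
    hM.nonzeroIndicator.{w} m = 0 ↔ m = 0 := by
  by_cases hm : m = 0 <;> simp [IsSharp.nonzeroIndicator, hm]

theorem IsSharp.nonzeroIndicator_apply_of_ne_zero (hM : IsSharp M) {m : M} (hm : m ≠ 0) :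
    hM.nonzeroIndicator.{w} m = ⊤ := by
  simp [IsSharp.nonzeroIndicator, hm]

end Sharp

section Pushout

variable {N M L P : Type*} [AddCommMonoid N] [AddCommMonoid M] [AddCommMonoid L]
  [AddCommMonoid P] {f : N →+ M} {g : N →+ L} {iM : M →+ P} {iL : L →+ P}

theorem IsMonPushout.comp_apply_eq (hpo : IsMonPushout f g iM iL) (a : N) :
    iM (f a) = iL (g a) :=
  DFunLike.congr_fun hpo.1 a

theorem IsMonPushout.eq_zero_of_inr_eq_zero (hpo : IsMonPushout.{_, _, _, _, w} f g iM iL)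
    (hM : IsSharp M) (hL : IsSharp L) (hf : ∀ a, f a = 0 → a = 0) (hg : ∀ a, g a = 0 → a = 0)
    {x : L} (hx : iL x = 0) : x = 0 := by
  have hglue : hM.nonzeroIndicator.{w}.comp f = hL.nonzeroIndicator.{w}.comp g := by
    ext a
    by_cases ha : a = 0
    · simp [ha]
    · simp only [AddMonoidHom.comp_apply,
        hM.nonzeroIndicator_apply_of_ne_zero (mt (hf a) ha),
        hL.nonzeroIndicator_apply_of_ne_zero (mt (hg a) ha)]
  obtain ⟨h, ⟨-, hhL⟩, -⟩ := hpo.2 _ _ _ hglue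
  have : hL.nonzeroIndicator.{w} x = 0 := by
    rw [← hhL, AddMonoidHom.comp_apply, hx, map_zero]
  exact hL.nonzeroIndicator_apply_eq_zero_iff.1 this

theorem IsMonPushout.map_inr_eq_zero {Mgp Pgp : Type*} [AddCommGroup Mgp] [AddCommGroup Pgp]
    (hpo : IsMonPushout f g iM iL) {ηM : M →+ Mgp} (hgpM : IsGroupification ηM)
    (ηP : P →+ Pgp) {x : L} {a b : N} (hx : x + g a = g b) (hab : ηM (f a) = ηM (f b)) :
    ηP (iL x) = 0 := by
  obtain ⟨k, hk⟩ := (hgpM.2 _ _).1 hab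
  have hPab : ηP (iM (f a)) = ηP (iM (f b)) :=
    add_right_cancel (b := ηP (iM k)) (by simp only [← map_add, hk])
  have hsum : ηP (iL x) + ηP (iM (f a)) = ηP (iM (f b)) := by
    rw [hpo.comp_apply_eq, hpo.comp_apply_eq, ← map_add, ← map_add, hx]
  rwa [hPab, add_eq_right] at hsum

end Pushout

theorem stmt10_general {N M Ngp Mgp : Type*} [AddCommMonoid N] [AddCommMonoid M]
    [AddCommGroup Ngp] [AddCommGroup Mgp]
    (ηN : N →+ Ngp) (hgpN : IsGroupification ηN) (hNinj : Function.Injective ηN)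
    (hNsharp : IsSharp N)
    (L : AddSubmonoid Ngp) (hsub : ∀ n : N, ηN n ∈ L)
    (hLsharp : ∀ x : Ngp, x ∈ L → -x ∈ L → x = 0)
    (ηM : M →+ Mgp) (hgpM : IsGroupification ηM)
    (hMsharp : IsSharp M)
    (i : N →+ M) (hiloc : IsLocalMonoidHom i)
    (I : Ngp →+ Mgp) (hI : I.comp ηN = ηM.comp i)
    (n : Ngp) (hn0 : I n = 0) (hnL : -n ∈ L) (hne : n ≠ 0)
    (P : Type*) [AddCommMonoid P] (iM : M →+ P) (iL : L →+ P)
    (hpo : IsMonPushout i (ηN.codRestrict L hsub) iM iL)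
    (Pgp : Type*) [AddCommGroup Pgp] (ηP : P →+ Pgp) :
    ∃ p : P, ηP p = 0 ∧ p ≠ 0 := by
  obtain ⟨a, b, rfl⟩ := hgpN.1 n
  refine ⟨iL ⟨_, hnL⟩, hpo.map_inr_eq_zero hgpM ηP (a := a) (b := b) ?_ ?_, fun hp => hne ?_⟩
  · exact Subtype.ext (show -(ηN a - ηN b) + ηN a = ηN b by abel)
  · have hI' := DFunLike.congr_fun hI
    simp only [AddMonoidHom.comp_apply] at hI'
    rw [← hI', ← hI', ← sub_eq_zero, ← map_sub, hn0]
  · have hi : ∀ c, i c = 0 → c = 0 := fun c hc => hNsharp c (hiloc c (hc ▸ isAddUnit_zero))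
    have hg : ∀ c, ηN.codRestrict L hsub c = 0 → c = 0 :=
      fun c hc => hNinj (by simpa using congrArg Subtype.val hc)
    exact neg_eq_zero.mp <| congrArg Subtype.val
      (hpo.eq_zero_of_inr_eq_zero hMsharp (L.isSharp hLsharp) hi hg hp)

/-- Let `N` be a sharp fs monoid, `L` a sharp fs monoid with `N ⊆ L ⊆ N^gp`, `M` a sharp
fs monoid, and `i : N → M` a local morphism.  Suppose `n ∈ N^gp` satisfies `i^gp n = 0`,
`-n ∈ L`, and `n ≠ 0`.  Then the push-out `M ⊔_N L` (along `i` and the inclusion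
`N ↪ L`) is not quasi-integral. -/
theorem stmt10 {N M Ngp Mgp : Type*} [AddCommMonoid N] [AddCommMonoid M]
    [AddCommGroup Ngp] [AddCommGroup Mgp]
    (ηN : N →+ Ngp) (hgpN : IsGroupification ηN) (hNinj : Function.Injective ηN)
    (hNsharp : IsSharp N) (hNfg : AddMonoid.FG N)
    (hNsat : ∀ x : Ngp, (∃ a : ℕ, 0 < a ∧ a • x ∈ AddMonoidHom.mrange ηN) →
      x ∈ AddMonoidHom.mrange ηN)
    (L : AddSubmonoid Ngp) (hsub : ∀ n : N, ηN n ∈ L)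
    (hLsharp : ∀ x : Ngp, x ∈ L → -x ∈ L → x = 0)
    (hLfg : L.FG)
    (hLsat : ∀ x : Ngp, (∃ a : ℕ, 0 < a ∧ a • x ∈ L) → x ∈ L)
    (ηM : M →+ Mgp) (hgpM : IsGroupification ηM) (hMinj : Function.Injective ηM)
    (hMsharp : IsSharp M) (hMfg : AddMonoid.FG M)
    (hMsat : ∀ x : Mgp, (∃ a : ℕ, 0 < a ∧ a • x ∈ AddMonoidHom.mrange ηM) →
      x ∈ AddMonoidHom.mrange ηM)
    (i : N →+ M) (hiloc : IsLocalMonoidHom i)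
    (I : Ngp →+ Mgp) (hI : I.comp ηN = ηM.comp i)
    (n : Ngp) (hn0 : I n = 0) (hnL : -n ∈ L) (hne : n ≠ 0)
    (P : Type*) [AddCommMonoid P] (iM : M →+ P) (iL : L →+ P)
    (hpo : IsMonPushout i (ηN.codRestrict L hsub) iM iL)
    (Pgp : Type*) [AddCommGroup Pgp] (ηP : P →+ Pgp) (hgpP : IsGroupification ηP) :
    ∃ p : P, ηP p = 0 ∧ p ≠ 0 :=
  stmt10_general ηN hgpN hNinj hNsharp L hsub hLsharp ηM hgpM hMsharp i hiloc I hI n hn0 hnL hne P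
    iM iL hpo Pgp ηP
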